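/- arXiv:2108.12646 — 5 statements merged into one kernel-verified Lean document; each statement's English description precedes it below -/
import Mathlib

section
/- The function w(x', x_n) = x_n / (|x'|² + β x_n^{2+2α})^γ with β = 1/(1+α)² and γ = (n-1)/2 + 1/(2(1+α)) satisfies the Baouendi–Grushin equation x_n^{2α} Δ_{x'} w + ∂²_{x_n x_n} w = 0 in the open upper half space {x ∈ ℝⁿ : x_n > 0}. -/
open scoped BigOperators

noncomputable def pderiv1 {m : ℕ} (u : EuclideanSpace ℝ (Fin m) × ℝ → ℝ)
    (v x : EuclideanSpace ℝ (Fin m) × ℝ) : ℝ :=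
  deriv (fun t : ℝ => u (x + t • v)) 0

noncomputable def pderiv2 {m : ℕ} (u : EuclideanSpace ℝ (Fin m) × ℝ → ℝ)
    (v w x : EuclideanSpace ℝ (Fin m) × ℝ) : ℝ :=
  pderiv1 (pderiv1 u v) w x

noncomputable def bvec (m : ℕ) (i : Fin m) : EuclideanSpace ℝ (Fin m) × ℝ :=
  (EuclideanSpace.single i 1, 0)

noncomputable def nvec (m : ℕ) : EuclideanSpace ℝ (Fin m) × ℝ := (0, 1)

/-- The function `w(x', xₙ) = xₙ (|x'|² + β xₙ^{2+2α})^{-γ}` with `β = 1/(1+α)²`,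
`γ = (n-1)/2 + 1/(2(1+α))` satisfies the Baouendi–Grushin equation
`xₙ^{2α} Δ_{x'} w + ∂²_{xₙxₙ} w = 0` in the open upper half space. Here `m = n - 1 ≥ 1`. -/
theorem stmt0 (m : ℕ) (hm : 1 ≤ m) (α : ℝ) (hα : 0 < α)
    (β γ : ℝ) (hβ : β = 1 / (1 + α) ^ 2) (hγ : γ = (m : ℝ) / 2 + 1 / (2 * (1 + α)))
    (w : EuclideanSpace ℝ (Fin m) × ℝ → ℝ)
    (hw : ∀ x : EuclideanSpace ℝ (Fin m) × ℝ,
      w x = x.2 * (‖x.1‖ ^ 2 + β * x.2 ^ (2 + 2 * α)) ^ (-γ)) :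
    ∀ x : EuclideanSpace ℝ (Fin m) × ℝ, 0 < x.2 →
      x.2 ^ (2 * α) * ∑ i : Fin m, pderiv2 w (bvec m i) (bvec m i) x
        + pderiv2 w (nvec m) (nvec m) x = 0 := by
  have ha : (0:ℝ) < 1 + α := by linarith
  have hβ0 : 0 < β := by rw [hβ]; positivity
  -- first tangential derivatives
  have hk1 : ∀ (i : Fin m) (y : EuclideanSpace ℝ (Fin m) × ℝ), 0 < y.2 →
      pderiv1 w (bvec m i) y =
        y.2 * (2 * (y.1 i) * -γ * (‖y.1‖^2 + β * y.2 ^ (2+2*α)) ^ (-γ-1)) := by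
    intro i y hy
    have hP : (0:ℝ) < ‖y.1‖^2 + β * y.2 ^ (2+2*α) :=
      add_pos_of_nonneg_of_pos (by positivity) (mul_pos hβ0 (Real.rpow_pos_of_pos hy _))
    have hfun : (fun t : ℝ => w (y + t • bvec m i)) =
        fun t => y.2 * ((‖y.1‖^2 + 2*(y.1 i)*t + t^2 + β * y.2 ^ (2+2*α)) ^ (-γ)) := by
      funext t
      rw [hw]
      have h1 : (y + t • bvec m i).2 = y.2 := by simp [bvec]
      have h2 : (y + t • bvec m i).1 = y.1 + t • EuclideanSpace.single i (1:ℝ) := by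
        simp [bvec]
      rw [h1, h2]
      congr 2
      rw [norm_add_sq_real, real_inner_smul_right, EuclideanSpace.inner_single_right]
      simp [norm_smul]
      ring
    have hu : HasDerivAt (fun t : ℝ => ‖y.1‖^2 + 2*(y.1 i)*t + t^2 + β * y.2 ^ (2+2*α))
        (2*(y.1 i)) 0 := by
      have h1 : HasDerivAt (fun t : ℝ => 2*(y.1 i)*t) (2*(y.1 i)) 0 := by
        simpa using (hasDerivAt_id (0:ℝ)).const_mul (2*(y.1 i))
      have h2 : HasDerivAt (fun t : ℝ => t^2) 0 0 := by
        simpa using hasDerivAt_pow 2 (0:ℝ)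
      simpa using ((h1.const_add (‖y.1‖^2)).add h2).add_const (β * y.2 ^ (2+2*α))
    have hv := (hu.rpow_const (p := -γ) (Or.inl (by simpa using hP.ne'))).const_mul y.2
    rw [pderiv1, hfun, hv.deriv]
    norm_num
  -- second tangential derivatives
  have hk2 : ∀ (i : Fin m) (x : EuclideanSpace ℝ (Fin m) × ℝ), 0 < x.2 →
      pderiv2 w (bvec m i) (bvec m i) x =
        x.2 * (2 * -γ * (‖x.1‖^2 + β * x.2 ^ (2+2*α)) ^ (-γ-1))
        + x.2 * (4 * (-γ) * (-γ-1) * (‖x.1‖^2 + β * x.2 ^ (2+2*α)) ^ (-γ-1-1)) * (x.1 i)^2 := by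
    intro i x hx
    have hP : (0:ℝ) < ‖x.1‖^2 + β * x.2 ^ (2+2*α) :=
      add_pos_of_nonneg_of_pos (by positivity) (mul_pos hβ0 (Real.rpow_pos_of_pos hx _))
    have hfun : (fun t : ℝ => pderiv1 w (bvec m i) (x + t • bvec m i)) =
        fun t => x.2 * (2 * (x.1 i + t) * -γ
          * ((‖x.1‖^2 + 2*(x.1 i)*t + t^2 + β * x.2 ^ (2+2*α)) ^ (-γ-1))) := by
      funext t
      rw [hk1 i (x + t • bvec m i) (by simpa [bvec] using hx)]
      have h1 : (x + t • bvec m i).2 = x.2 := by simp [bvec]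
      have h2 : (x + t • bvec m i).1 = x.1 + t • EuclideanSpace.single i (1:ℝ) := by
        simp [bvec]
      rw [h1, h2]
      have h3 : (x.1 + t • EuclideanSpace.single i (1:ℝ)) i = x.1 i + t := by
        simp [EuclideanSpace.single_apply]
      have h4 : ‖x.1 + t • EuclideanSpace.single i (1:ℝ)‖^2
          = ‖x.1‖^2 + 2*(x.1 i)*t + t^2 := by
        rw [norm_add_sq_real, real_inner_smul_right, EuclideanSpace.inner_single_right]
        simp [norm_smul]
        ring
      rw [h3, h4]
    have hu : HasDerivAt (fun t : ℝ => ‖x.1‖^2 + 2*(x.1 i)*t + t^2 + β * x.2 ^ (2+2*α))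
        (2*(x.1 i)) 0 := by
      have h1 : HasDerivAt (fun t : ℝ => 2*(x.1 i)*t) (2*(x.1 i)) 0 := by
        simpa using (hasDerivAt_id (0:ℝ)).const_mul (2*(x.1 i))
      have h2 : HasDerivAt (fun t : ℝ => t^2) 0 0 := by
        simpa using hasDerivAt_pow 2 (0:ℝ)
      simpa using ((h1.const_add (‖x.1‖^2)).add h2).add_const (β * x.2 ^ (2+2*α))
    have h1 := hu.rpow_const (p := -γ-1) (Or.inl (by simpa using hP.ne'))
    have h2 : HasDerivAt (fun t : ℝ => 2 * (x.1 i + t) * -γ) (2 * -γ) 0 := by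
      have := ((hasDerivAt_id (0:ℝ)).const_add (x.1 i)).const_mul 2
      simpa using this.mul_const (-γ)
    have hv := (h2.mul h1).const_mul x.2
    have e0 : ‖x.1‖^2 + 2*(x.1 i)*0 + 0^2 + β * x.2 ^ (2+2*α)
        = ‖x.1‖^2 + β * x.2 ^ (2+2*α) := by norm_num
    rw [e0] at hv
    simp only [Pi.mul_def] at hv
    rw [pderiv2, pderiv1, hfun, hv.deriv]
    ring
  -- first normal derivative
  have hk3 : ∀ (y : EuclideanSpace ℝ (Fin m) × ℝ), 0 < y.2 →
      pderiv1 w (nvec m) y =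
        (‖y.1‖^2 + β * y.2 ^ (2+2*α)) ^ (-γ)
        + y.2 * β * (2+2*α) * y.2 ^ (2+2*α-1) * -γ
          * (‖y.1‖^2 + β * y.2 ^ (2+2*α)) ^ (-γ-1) := by
    intro y hy
    have hP : (0:ℝ) < ‖y.1‖^2 + β * y.2 ^ (2+2*α) :=
      add_pos_of_nonneg_of_pos (by positivity) (mul_pos hβ0 (Real.rpow_pos_of_pos hy _))
    have hfun : (fun t : ℝ => w (y + t • nvec m)) =
        fun t => (y.2 + t) * ((‖y.1‖^2 + β * (y.2 + t) ^ (2+2*α)) ^ (-γ)) := by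
      funext t
      rw [hw]
      have h1 : (y + t • nvec m).2 = y.2 + t := by simp [nvec]
      have h2 : (y + t • nvec m).1 = y.1 := by simp [nvec]
      rw [h1, h2]
    have hs : HasDerivAt (fun t : ℝ => y.2 + t) 1 0 := by
      simpa using (hasDerivAt_id (0:ℝ)).const_add y.2
    have hr1 := hs.rpow_const (p := 2+2*α) (Or.inr (by linarith))
    have hv := (hr1.const_mul β).const_add (‖y.1‖^2)
    simp only [add_zero] at hv hr1
    have hA := hv.rpow_const (p := -γ) (Or.inl (by simpa using hP.ne'))
    have hT := hs.mul hA
    simp only [add_zero] at hT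
    simp only [Pi.mul_def] at hT
    rw [pderiv1, hfun, hT.deriv]
    ring
  -- second normal derivative
  have hk4 : ∀ (x : EuclideanSpace ℝ (Fin m) × ℝ), 0 < x.2 →
      pderiv2 w (nvec m) (nvec m) x =
        2 * β * (2+2*α) * x.2 ^ (2+2*α-1) * -γ * (‖x.1‖^2 + β * x.2 ^ (2+2*α)) ^ (-γ-1)
        + β * (2+2*α) * (2+2*α-1) * x.2 * x.2 ^ (2+2*α-1-1) * -γ
            * (‖x.1‖^2 + β * x.2 ^ (2+2*α)) ^ (-γ-1)
        + β^2 * (2+2*α)^2 * x.2 * x.2 ^ (2+2*α-1) * x.2 ^ (2+2*α-1) * γ * (γ+1)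
            * (‖x.1‖^2 + β * x.2 ^ (2+2*α)) ^ (-γ-1-1) := by
    intro x hx
    have hP : (0:ℝ) < ‖x.1‖^2 + β * x.2 ^ (2+2*α) :=
      add_pos_of_nonneg_of_pos (by positivity) (mul_pos hβ0 (Real.rpow_pos_of_pos hx _))
    have heq : (fun t : ℝ => pderiv1 w (nvec m) (x + t • nvec m)) =ᶠ[nhds 0]
        fun t => (‖x.1‖^2 + β * (x.2+t) ^ (2+2*α)) ^ (-γ)
          + (x.2+t) * β * (2+2*α) * (x.2+t) ^ (2+2*α-1) * -γ
            * (‖x.1‖^2 + β * (x.2+t) ^ (2+2*α)) ^ (-γ-1) := by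
      filter_upwards [Ioi_mem_nhds (show -x.2 < (0:ℝ) by linarith)] with t ht
      have h2 : (x + t • nvec m).2 = x.2 + t := by simp [nvec]
      have h1 : (x + t • nvec m).1 = x.1 := by simp [nvec]
      rw [hk3 (x + t • nvec m) (by rw [h2]; simp at ht; linarith), h1, h2]
    have hs : HasDerivAt (fun t : ℝ => x.2 + t) 1 0 := by
      simpa using (hasDerivAt_id (0:ℝ)).const_add x.2
    have hr1 := hs.rpow_const (p := 2+2*α) (Or.inr (by linarith))
    have hr2 := hs.rpow_const (p := 2+2*α-1) (Or.inr (by linarith))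
    have hv := (hr1.const_mul β).const_add (‖x.1‖^2)
    have hA := hv.rpow_const (p := -γ) (Or.inl (by simpa using hP.ne'))
    have hB := hv.rpow_const (p := -γ-1) (Or.inl (by simpa using hP.ne'))
    have hT := hA.add (((((hs.mul_const β).mul_const (2+2*α)).mul hr2).mul_const (-γ)).mul hB)
    simp only [add_zero] at hT
    simp only [Pi.mul_def, Pi.add_def] at hT
    rw [pderiv2, pderiv1, Filter.EventuallyEq.deriv_eq heq, hT.deriv]
    ring
  -- final assembly
  intro x hx
  have hP : (0:ℝ) < ‖x.1‖^2 + β * x.2 ^ (2+2*α) :=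
    add_pos_of_nonneg_of_pos (by positivity) (mul_pos hβ0 (Real.rpow_pos_of_pos hx _))
  have hqsum : ∑ i : Fin m, (x.1 i)^2 = ‖x.1‖^2 := by
    rw [EuclideanSpace.norm_eq, Real.sq_sqrt (by positivity)]
    simp [sq_abs]
  have hsum : ∑ i : Fin m, pderiv2 w (bvec m i) (bvec m i) x
      = (m:ℝ) * (x.2 * (2 * -γ * (‖x.1‖^2 + β * x.2 ^ (2+2*α)) ^ (-γ-1)))
        + x.2 * (4 * (-γ) * (-γ-1) * (‖x.1‖^2 + β * x.2 ^ (2+2*α)) ^ (-γ-1-1)) * ‖x.1‖^2 := by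
    rw [Finset.sum_congr rfl (fun i _ => hk2 i x hx), Finset.sum_add_distrib,
      Finset.sum_const, ← Finset.mul_sum, hqsum]
    simp [nsmul_eq_mul]
  rw [hsum, hk4 x hx]
  -- power decompositions
  have hE1 : x.2 ^ (2+2*α) = x.2^2 * x.2 ^ (2*α) := by
    rw [Real.rpow_add hx 2 (2*α)]
    norm_num
  have hE2 : x.2 ^ (2+2*α-1) = x.2 * x.2 ^ (2*α) := by
    rw [show (2+2*α-1:ℝ) = 1 + 2*α by ring, Real.rpow_add hx, Real.rpow_one]
  have hE3 : x.2 ^ (2+2*α-1-1) = x.2 ^ (2*α) := by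
    rw [show (2+2*α-1-1:ℝ) = 2*α by ring]
  have hQ : (‖x.1‖^2 + β * x.2 ^ (2+2*α)) ^ (-γ-1)
      = (‖x.1‖^2 + β * x.2 ^ (2+2*α)) ^ (-γ-1-1) * (‖x.1‖^2 + β * x.2 ^ (2+2*α)) := by
    have h := Real.rpow_add_one hP.ne' (-γ-1-1)
    rw [show (-γ-1-1)+1 = -γ-1 by ring] at h
    exact h
  rw [hQ, hE1, hE2, hE3]
  have hT0 : (0:ℝ) < x.2 ^ (2*α) := Real.rpow_pos_of_pos hx _
  set T := x.2 ^ (2*α) with hT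
  set Q := (‖x.1‖^2 + β * (x.2^2 * T)) ^ (-γ-1-1) with hQdef
  rw [hβ, hγ]
  field_simp
  ring
end

section
/- Suppose the symmetric coefficients satisfy λ|ξ|² ≤ ξᵀ(a_{ij}(x))_{i,j<n} ξ ≤ Λ|ξ|² for all ξ ∈ ℝ^{n-1} and 1 − λ^{-1} Σ_{i<n} ‖a_{in}‖²_∞ > δ for some δ ∈ (0,1). Then for every x in the upper half space with x_n ≥ ε₀ > 0, the full n×n matrix A(x) with entries A_{ij} = a_{ij}x_n^{2α} (i,j<n), A_{in} = A_{ni} = a_{in}x_n^α (i<n), A_{nn} = 1, satisfies ξᵀA(x)ξ ≥ min{(δλ/2)ε₀^{2α}, 1 − (1−δ/2)^{-1}(1−δ)}|ξ|² for all ξ ∈ ℝⁿ; in particular A(x) is positive definite for every x_n > 0. -/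
/-- Under the ellipticity conditions `λ|ξ|² ≤ ξᵀ(a_{ij})ξ ≤ Λ|ξ|²` and
`1 − λ⁻¹ Σ ‖a_{in}‖²_∞ > δ`, the full matrix `A(x)` with entries `a_{ij}xₙ^{2α}`,
`a_{in}xₙ^α`, `A_{nn} = 1` satisfies
`ξᵀA(x)ξ ≥ min{(δλ/2)ε₀^{2α}, 1 − (1−δ/2)⁻¹(1−δ)}|ξ|²` for `xₙ ≥ ε₀`, and is positive
definite for every `xₙ > 0`. -/
theorem stmt8 (m : ℕ) (hm : 1 ≤ m) (α lam Lam δ ε₀ : ℝ)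
    (hα : 0 < α) (hlam : 0 < lam) (hLam : lam ≤ Lam) (hδ0 : 0 < δ) (hδ1 : δ < 1)
    (hε₀ : 0 < ε₀)
    (a : EuclideanSpace ℝ (Fin m) × ℝ → Fin m → Fin m → ℝ)
    (b : EuclideanSpace ℝ (Fin m) × ℝ → Fin m → ℝ)
    (hsymm : ∀ x i j, a x i j = a x j i)
    (hell : ∀ (x : EuclideanSpace ℝ (Fin m) × ℝ) (ξ : EuclideanSpace ℝ (Fin m)),
      lam * ‖ξ‖ ^ 2 ≤ ∑ i : Fin m, ∑ j : Fin m, a x i j * ξ i * ξ j ∧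
        ∑ i : Fin m, ∑ j : Fin m, a x i j * ξ i * ξ j ≤ Lam * ‖ξ‖ ^ 2)
    (M : Fin m → ℝ) (hM : ∀ x i, |b x i| ≤ M i)
    (hδ : δ < 1 - lam⁻¹ * ∑ i : Fin m, M i ^ 2) :
    (∀ x : EuclideanSpace ℝ (Fin m) × ℝ, ε₀ ≤ x.2 →
      ∀ ξ : EuclideanSpace ℝ (Fin m) × ℝ,
        min (δ * lam / 2 * ε₀ ^ (2 * α)) (1 - (1 - δ / 2)⁻¹ * (1 - δ)) *
            (‖ξ.1‖ ^ 2 + ξ.2 ^ 2)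
          ≤ x.2 ^ (2 * α) * ∑ i : Fin m, ∑ j : Fin m, a x i j * ξ.1 i * ξ.1 j
            + 2 * x.2 ^ α * ∑ i : Fin m, b x i * ξ.1 i * ξ.2 + ξ.2 ^ 2) ∧
    (∀ x : EuclideanSpace ℝ (Fin m) × ℝ, 0 < x.2 →
      ∀ ξ : EuclideanSpace ℝ (Fin m) × ℝ, ξ ≠ 0 →
        0 < x.2 ^ (2 * α) * ∑ i : Fin m, ∑ j : Fin m, a x i j * ξ.1 i * ξ.1 j
            + 2 * x.2 ^ α * ∑ i : Fin m, b x i * ξ.1 i * ξ.2 + ξ.2 ^ 2) := by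
  have h1δ : (0:ℝ) < 1 - δ := by linarith
  have h2δ : (0:ℝ) < 1 - δ / 2 := by linarith
  set c : ℝ := (1 - δ / 2) / (1 - δ) with hcdef
  have hc : 0 < c := div_pos h2δ h1δ
  set S : ℝ := ∑ i : Fin m, M i ^ 2 with hSdef
  have hS0 : 0 ≤ S := Finset.sum_nonneg fun i _ => sq_nonneg _
  have hSlt : S < (1 - δ) * lam := by
    have h1 : lam⁻¹ * S < 1 - δ := by linarith
    have h2 : lam * (lam⁻¹ * S) < lam * (1 - δ) :=
      mul_lt_mul_of_pos_left h1 hlam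
    rw [← mul_assoc, mul_inv_cancel₀ (ne_of_gt hlam), one_mul] at h2
    linarith
  have hcmul : c * (1 - δ) = 1 - δ / 2 := by
    rw [hcdef]; field_simp
  have hcS : c * S < (1 - δ / 2) * lam := by
    calc c * S < c * ((1 - δ) * lam) := mul_lt_mul_of_pos_left hSlt hc
      _ = (1 - δ / 2) * lam := by rw [← mul_assoc, hcmul]
  have hgap : δ * lam / 2 ≤ lam - c * S := by nlinarith
  -- κ = 1 - c⁻¹
  have hcinv : c⁻¹ = (1 - δ / 2)⁻¹ * (1 - δ) := by
    rw [hcdef, inv_div, div_eq_inv_mul]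
  have hκ : 0 < 1 - (1 - δ / 2)⁻¹ * (1 - δ) := by
    rw [← hcinv]
    have : c⁻¹ < 1 := by
      rw [inv_lt_one_iff₀]; right
      rw [hcdef, lt_div_iff₀ h1δ]; linarith
    linarith
  -- Cauchy–Schwarz
  have hCS : ∀ (x : EuclideanSpace ℝ (Fin m) × ℝ) (ξ : EuclideanSpace ℝ (Fin m)),
      (∑ i : Fin m, b x i * ξ i) ^ 2 ≤ S * ‖ξ‖ ^ 2 := by
    intro x ξ
    have hnorm : ‖ξ‖ ^ 2 = ∑ i : Fin m, ξ i ^ 2 := by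
      rw [EuclideanSpace.norm_eq, Real.sq_sqrt (Finset.sum_nonneg fun i _ => sq_nonneg _)]
      simp [Real.norm_eq_abs, sq_abs]
    have h1 : |∑ i : Fin m, b x i * ξ i| ≤ ∑ i : Fin m, M i * |ξ i| := by
      calc |∑ i : Fin m, b x i * ξ i| ≤ ∑ i : Fin m, |b x i * ξ i| :=
            Finset.abs_sum_le_sum_abs _ _
        _ ≤ ∑ i : Fin m, M i * |ξ i| := Finset.sum_le_sum fun i _ => by
            rw [abs_mul]; exact mul_le_mul_of_nonneg_right (hM x i) (abs_nonneg _)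
    have h2 : (∑ i : Fin m, M i * |ξ i|) ^ 2 ≤
        (∑ i : Fin m, M i ^ 2) * ∑ i : Fin m, |ξ i| ^ 2 :=
      Finset.sum_mul_sq_le_sq_mul_sq _ _ _
    have h3 : (∑ i : Fin m, b x i * ξ i) ^ 2 ≤ (∑ i : Fin m, M i * |ξ i|) ^ 2 := by
      rw [← sq_abs]
      exact pow_le_pow_left₀ (abs_nonneg _) h1 2
    have h4 : (∑ i : Fin m, |ξ i| ^ 2) = ∑ i : Fin m, ξ i ^ 2 := by
      simp [sq_abs]
    rw [hnorm]
    calc (∑ i : Fin m, b x i * ξ i) ^ 2 ≤ (∑ i : Fin m, M i * |ξ i|) ^ 2 := h3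
      _ ≤ S * ∑ i : Fin m, |ξ i| ^ 2 := h2
      _ = S * ∑ i : Fin m, ξ i ^ 2 := by rw [h4]
  -- key pointwise estimate
  have key : ∀ x : EuclideanSpace ℝ (Fin m) × ℝ, 0 < x.2 →
      ∀ ξ : EuclideanSpace ℝ (Fin m) × ℝ,
      δ * lam / 2 * x.2 ^ (2 * α) * ‖ξ.1‖ ^ 2
        + (1 - (1 - δ / 2)⁻¹ * (1 - δ)) * ξ.2 ^ 2
      ≤ x.2 ^ (2 * α) * ∑ i : Fin m, ∑ j : Fin m, a x i j * ξ.1 i * ξ.1 j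
        + 2 * x.2 ^ α * ∑ i : Fin m, b x i * ξ.1 i * ξ.2 + ξ.2 ^ 2 := by
    intro x hx ξ
    have ht0 : 0 < x.2 ^ α := Real.rpow_pos_of_pos hx α
    have hT : x.2 ^ (2 * α) = (x.2 ^ α) ^ 2 := by
      rw [two_mul, Real.rpow_add hx, sq]
    set t : ℝ := x.2 ^ α with htdef
    set B : ℝ := ∑ i : Fin m, b x i * ξ.1 i with hBdef
    set Q : ℝ := ∑ i : Fin m, ∑ j : Fin m, a x i j * ξ.1 i * ξ.1 j with hQdef
    have hQ : lam * ‖ξ.1‖ ^ 2 ≤ Q := (hell x ξ.1).1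
    have hB : B ^ 2 ≤ S * ‖ξ.1‖ ^ 2 := hCS x ξ.1
    have hsum : (∑ i : Fin m, b x i * ξ.1 i * ξ.2) = B * ξ.2 := by
      rw [hBdef, Finset.sum_mul]
    have hcc : c * c⁻¹ = 1 := mul_inv_cancel₀ (ne_of_gt hc)
    have hAM : -(c * (t * B) ^ 2 + c⁻¹ * ξ.2 ^ 2) ≤ 2 * t * B * ξ.2 := by
      have h0 : 0 ≤ c⁻¹ * (c * (t * B) + ξ.2) ^ 2 :=
        mul_nonneg (inv_nonneg.mpr hc.le) (sq_nonneg _)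
      have hexp : c⁻¹ * (c * (t * B) + ξ.2) ^ 2
          = (c * c⁻¹) * (c * (t * B) ^ 2 + 2 * (t * B) * ξ.2) + c⁻¹ * ξ.2 ^ 2 := by
        ring
      rw [hexp, hcc, one_mul] at h0
      linarith
    rw [hT, hsum, ← hcinv]
    have hQ' : (t ^ 2) * (lam * ‖ξ.1‖ ^ 2) ≤ t ^ 2 * Q :=
      mul_le_mul_of_nonneg_left hQ (sq_nonneg t)
    have hB' : c * (t ^ 2 * B ^ 2) ≤ c * (t ^ 2 * (S * ‖ξ.1‖ ^ 2)) :=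
      mul_le_mul_of_nonneg_left (mul_le_mul_of_nonneg_left hB (sq_nonneg t)) hc.le
    have hgap' : (δ * lam / 2) * (t ^ 2 * ‖ξ.1‖ ^ 2) ≤ (lam - c * S) * (t ^ 2 * ‖ξ.1‖ ^ 2) :=
      mul_le_mul_of_nonneg_right hgap (mul_nonneg (sq_nonneg t) (sq_nonneg _))
    linarith [hAM, hQ', hB', hgap']
  constructor
  · intro x hx ξ
    have hx2 : 0 < x.2 := lt_of_lt_of_le hε₀ hx
    have hmono : ε₀ ^ (2 * α) ≤ x.2 ^ (2 * α) :=
      Real.rpow_le_rpow hε₀.le hx (by positivity)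
    have hmin1 : min (δ * lam / 2 * ε₀ ^ (2 * α)) (1 - (1 - δ / 2)⁻¹ * (1 - δ)) * ‖ξ.1‖ ^ 2
        ≤ δ * lam / 2 * x.2 ^ (2 * α) * ‖ξ.1‖ ^ 2 := by
      apply mul_le_mul_of_nonneg_right _ (sq_nonneg _)
      calc min (δ * lam / 2 * ε₀ ^ (2 * α)) (1 - (1 - δ / 2)⁻¹ * (1 - δ))
          ≤ δ * lam / 2 * ε₀ ^ (2 * α) := min_le_left _ _
        _ ≤ δ * lam / 2 * x.2 ^ (2 * α) :=
          mul_le_mul_of_nonneg_left hmono (by positivity)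
    have hmin2 : min (δ * lam / 2 * ε₀ ^ (2 * α)) (1 - (1 - δ / 2)⁻¹ * (1 - δ)) * ξ.2 ^ 2
        ≤ (1 - (1 - δ / 2)⁻¹ * (1 - δ)) * ξ.2 ^ 2 :=
      mul_le_mul_of_nonneg_right (min_le_right _ _) (sq_nonneg _)
    have hk := key x hx2 ξ
    calc min (δ * lam / 2 * ε₀ ^ (2 * α)) (1 - (1 - δ / 2)⁻¹ * (1 - δ)) *
          (‖ξ.1‖ ^ 2 + ξ.2 ^ 2)
        = min (δ * lam / 2 * ε₀ ^ (2 * α)) (1 - (1 - δ / 2)⁻¹ * (1 - δ)) * ‖ξ.1‖ ^ 2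
          + min (δ * lam / 2 * ε₀ ^ (2 * α)) (1 - (1 - δ / 2)⁻¹ * (1 - δ)) * ξ.2 ^ 2 := by
          ring
      _ ≤ δ * lam / 2 * x.2 ^ (2 * α) * ‖ξ.1‖ ^ 2
          + (1 - (1 - δ / 2)⁻¹ * (1 - δ)) * ξ.2 ^ 2 := add_le_add hmin1 hmin2
      _ ≤ _ := hk
  · intro x hx ξ hξ
    have hk := key x hx ξ
    have hx2α : 0 < x.2 ^ (2 * α) := Real.rpow_pos_of_pos hx _
    have hcase : ξ.1 ≠ 0 ∨ ξ.2 ≠ 0 := by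
      by_contra h
      push_neg at h
      exact hξ (Prod.ext h.1 h.2)
    rcases hcase with h | h
    · have h1 : 0 < ‖ξ.1‖ ^ 2 := pow_pos (norm_pos_iff.mpr h) 2
      have h2 : 0 < δ * lam / 2 * x.2 ^ (2 * α) * ‖ξ.1‖ ^ 2 := by positivity
      have h3 : 0 ≤ (1 - (1 - δ / 2)⁻¹ * (1 - δ)) * ξ.2 ^ 2 :=
        mul_nonneg hκ.le (sq_nonneg _)
      linarith
    · have h1 : 0 < ξ.2 ^ 2 := by
        rw [← sq_abs]; exact pow_pos (abs_pos.mpr h) 2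
      have h2 : 0 < (1 - (1 - δ / 2)⁻¹ * (1 - δ)) * ξ.2 ^ 2 := mul_pos hκ h1
      have h3 : 0 ≤ δ * lam / 2 * x.2 ^ (2 * α) * ‖ξ.1‖ ^ 2 := by positivity
      linarith
end

section
/- Let B be a symmetric n×n matrix of the form with diagonal block diag(λ₁t, …, λ_{n-1}t) (t = x_n^{2α} > 0), last diagonal entry 1, and off-diagonal last-column entries b_i s (s = x_n^α), where λ ≤ λ_i and Σ b_i² ≤ (1−δ)λ for some δ ∈ (0,1). Then B is positive definite, with smallest eigenvalue at least min{(δ/2)λt, 1 − (1−δ/2)^{-1}(1−δ)}. -/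
set_option maxHeartbeats 1600000

/-- Linear algebra core of the ellipticity lemma: the symmetric matrix with diagonal block
`diag(λ₁t, …, λ_{n−1}t)`, last diagonal entry `1`, and last-column entries `bᵢ s`
(`s = t^{1/2}`), where `λ ≤ λᵢ` and `Σ bᵢ² ≤ (1−δ)λ`, is positive definite with smallest
eigenvalue (quadratic form lower bound) at least `min{(δ/2)λt, 1 − (1−δ/2)⁻¹(1−δ)}`. -/
theorem stmt9 (n : ℕ) (hn : 2 ≤ n) (t s lam δ : ℝ) (ht : 0 < t)
    (hs : s = t ^ ((1 : ℝ) / 2)) (hlam : 0 < lam) (hδ0 : 0 < δ) (hδ1 : δ < 1)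
    (lams : Fin (n - 1) → ℝ) (hlams : ∀ i, lam ≤ lams i)
    (b : Fin (n - 1) → ℝ) (hb : ∑ i, b i ^ 2 ≤ (1 - δ) * lam) :
    (∀ ξ : (Fin (n - 1) → ℝ) × ℝ, ξ ≠ 0 →
      0 < ∑ i, lams i * t * ξ.1 i ^ 2 + 2 * ∑ i, b i * s * ξ.1 i * ξ.2 + ξ.2 ^ 2) ∧
    (∀ ξ : (Fin (n - 1) → ℝ) × ℝ,
      min (δ / 2 * lam * t) (1 - (1 - δ / 2)⁻¹ * (1 - δ)) * (∑ i, ξ.1 i ^ 2 + ξ.2 ^ 2)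
        ≤ ∑ i, lams i * t * ξ.1 i ^ 2 + 2 * ∑ i, b i * s * ξ.1 i * ξ.2 + ξ.2 ^ 2) := by
  have hs2 : s ^ 2 = t := by
    rw [hs, ← Real.rpow_natCast (t ^ ((1:ℝ)/2)) 2, ← Real.rpow_mul ht.le]
    norm_num
  have hd2 : (0:ℝ) < 1 - δ/2 := by linarith
  set K : ℝ := (1 - δ/2)⁻¹ with hKdef
  have hK0 : 0 < K := inv_pos.mpr hd2
  have hK1 : K * (1 - δ/2) = 1 := inv_mul_cancel₀ (ne_of_gt hd2)
  have hm2 : 0 < 1 - K * (1 - δ) := by nlinarith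
  have hm1 : 0 < δ/2 * lam * t := by positivity
  -- key pointwise bound
  have key : ∀ ξ : (Fin (n - 1) → ℝ) × ℝ,
      δ/2*lam*t * (∑ i, ξ.1 i ^ 2) + (1 - K * (1 - δ)) * ξ.2 ^ 2
        ≤ ∑ i, lams i * t * ξ.1 i ^ 2 + 2 * ∑ i, b i * s * ξ.1 i * ξ.2 + ξ.2 ^ 2 := by
    intro ξ
    set X := ∑ i, ξ.1 i ^ 2 with hX
    set c := ∑ i, b i * ξ.1 i with hc
    set η := ξ.2 with hη
    have hcross : ∑ i, b i * s * ξ.1 i * ξ.2 = s * c * η := by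
      rw [hc, Finset.mul_sum, Finset.sum_mul]
      exact Finset.sum_congr rfl fun i _ => by ring
    have hX0 : 0 ≤ X := Finset.sum_nonneg fun i _ => sq_nonneg _
    have hY0 : 0 ≤ η ^ 2 := sq_nonneg _
    have hS1 : lam * t * X ≤ ∑ i, lams i * t * ξ.1 i ^ 2 := by
      rw [hX, Finset.mul_sum]
      refine Finset.sum_le_sum fun i _ => ?_
      have h1 : lam * t ≤ lams i * t := mul_le_mul_of_nonneg_right (hlams i) ht.le
      exact mul_le_mul_of_nonneg_right h1 (sq_nonneg _)
    have hCS : c ^ 2 ≤ (∑ i, b i ^ 2) * X := by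
      rw [hc, hX]
      exact Finset.sum_mul_sq_le_sq_mul_sq _ _ _
    have hc2 : c ^ 2 ≤ (1 - δ) * lam * X := by nlinarith
    have hq2 : (2 * (s * c * η)) ^ 2 ≤ 4 * ((1-δ) * lam * t) * X * η ^ 2 := by
      have h1 : (s * c * η) ^ 2 = t * (c ^ 2 * η ^ 2) := by rw [← hs2]; ring
      have h2 : c ^ 2 * η ^ 2 ≤ (1 - δ) * lam * X * η ^ 2 :=
        mul_le_mul_of_nonneg_right hc2 hY0
      nlinarith
    rw [hcross]
    have hA : 0 ≤ (1 - δ/2) * lam * t * X := by positivity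
    have hB : 0 ≤ K * (1 - δ) * η ^ 2 :=
      mul_nonneg (mul_nonneg hK0.le (by linarith)) hY0
    have hAB : ((1 - δ/2) * lam * t * X) * (K * (1 - δ) * η ^ 2)
        = (1-δ) * lam * t * X * η ^ 2 := by
      linear_combination ((1 - δ) * lam * t * X * η ^ 2) * hK1
    have core : 0 ≤ (1 - δ/2) * lam * t * X + 2 * (s * c * η) + K * (1 - δ) * η ^ 2 := by
      clear_value K X c η
      clear hcross hS1 hCS hc2 hX hc hη hb hlams
      nlinarith [sq_nonneg ((1 - δ/2) * lam * t * X - K * (1 - δ) * η ^ 2),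
        sq_nonneg ((1 - δ/2) * lam * t * X + K * (1 - δ) * η ^ 2 + 2 * (s * c * η)),
        hq2, hAB, hA, hB]
    linarith
  constructor
  · intro ξ hξ
    have hX0 : 0 ≤ ∑ i, ξ.1 i ^ 2 := Finset.sum_nonneg fun i _ => sq_nonneg _
    have hY0 : 0 ≤ ξ.2 ^ 2 := sq_nonneg _
    have hXY : 0 < ∑ i, ξ.1 i ^ 2 + ξ.2 ^ 2 := by
      rcases lt_or_eq_of_le (by linarith : (0:ℝ) ≤ ∑ i, ξ.1 i ^ 2 + ξ.2 ^ 2) with h | h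
      · exact h
      exfalso
      apply hξ
      have hX : ∑ i, ξ.1 i ^ 2 = 0 := by linarith
      have hY : ξ.2 ^ 2 = 0 := by linarith
      rw [Prod.ext_iff]
      refine ⟨funext fun i => ?_, sq_eq_zero_iff.mp hY⟩
      exact sq_eq_zero_iff.mp
        ((Finset.sum_eq_zero_iff_of_nonneg (fun i _ => sq_nonneg (ξ.1 i))).mp hX i
          (Finset.mem_univ i))
    have hkey := key ξ
    have hmin : 0 < min (δ/2*lam*t) (1 - K * (1 - δ)) := lt_min hm1 hm2
    have hp := mul_pos hmin hXY
    have h1 : min (δ/2*lam*t) (1 - K*(1-δ)) * (∑ i, ξ.1 i ^ 2)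
        ≤ δ/2*lam*t * (∑ i, ξ.1 i ^ 2) := mul_le_mul_of_nonneg_right (min_le_left _ _) hX0
    have h2 : min (δ/2*lam*t) (1 - K*(1-δ)) * ξ.2 ^ 2
        ≤ (1 - K*(1-δ)) * ξ.2 ^ 2 := mul_le_mul_of_nonneg_right (min_le_right _ _) hY0
    have hexp : min (δ/2*lam*t) (1 - K*(1-δ)) * (∑ i, ξ.1 i ^ 2 + ξ.2 ^ 2)
        = min (δ/2*lam*t) (1 - K*(1-δ)) * (∑ i, ξ.1 i ^ 2)
          + min (δ/2*lam*t) (1 - K*(1-δ)) * ξ.2 ^ 2 := mul_add _ _ _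
    linarith
  · intro ξ
    have hkey := key ξ
    set X := ∑ i, ξ.1 i ^ 2 with hXd
    set Y := ξ.2 ^ 2 with hYd
    set Q1 := ∑ i, lams i * t * ξ.1 i ^ 2 with hQ1d
    set Q2 := ∑ i, b i * s * ξ.1 i * ξ.2 with hQ2d
    set M := min (δ/2*lam*t) (1 - K*(1-δ)) with hMd
    have hX0 : 0 ≤ X := Finset.sum_nonneg fun i _ => sq_nonneg _
    have hY0 : 0 ≤ Y := sq_nonneg _
    clear_value X Y Q1 Q2
    have h1 : M * X ≤ δ/2*lam*t * X :=
      mul_le_mul_of_nonneg_right (min_le_left _ _) hX0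
    have h2 : M * Y ≤ (1 - K*(1-δ)) * Y :=
      mul_le_mul_of_nonneg_right (min_le_right _ _) hY0
    have hexp : M * (X + Y) = M * X + M * Y := mul_add _ _ _
    clear_value M
    linarith
end

section
/- For w(x) = x_n(|x'|² + β x_n^{2+2α})^{-γ} with β = (1+α)^{-2}, γ = (n−1)/2 + 1/(2(1+α)), and ρ ∈ (0,1), the function w^{1+ρ} is a strict subsolution of the Baouendi–Grushin operator in the upper half space: 𝔏(w^{1+ρ}) = ρ(1+ρ)w^{ρ−1}[x_n^{2α}Σ_{i<n}(D_i w)² + (D_n w)²] ≥ ρ(1+ρ)w^{ρ-1}(|x'|² + β x_n^{2+2α})^{-2γ} > 0 in {x_n > 0}. -/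
open scoped BigOperators

/-!
Write `s = |x'|² + β xₙ^{2+2α}` and `w = xₙ s^{-γ}`. Along every coordinate line the second
derivative of `w^{1+ρ}` obeys the one-variable chain rule
`(f^p)'' = p(p-1) f^{p-2} f'² + p f^{p-1} f''`, so
`𝔏(w^{1+ρ}) = ρ(1+ρ) w^{ρ-1} (xₙ^{2α}|∇ₓ' w|² + (Dₙw)²) + (1+ρ) w^ρ 𝔏w`, and `𝔏w = 0` by a direct
computation in which the choice of `β` and `γ` makes everything cancel. Computing the gradient,
`xₙ^{2α}|∇ₓ' w|² + (Dₙw)² = s^{-2γ-2} (4γ² xₙ^{2+2α}|x'|² + (s - 2γβ(1+α) xₙ^{2+2α})²)`, and the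
bracket is at least `s²` because `m(1+α) ≥ 1`.
-/

open Filter Topology

theorem deriv_deriv_rpow_const {f : ℝ → ℝ} {a : ℝ} (p : ℝ) (hf : ContDiffAt ℝ 2 f a)
    (ha : 0 < f a) :
    deriv (deriv fun t => f t ^ p) a =
      p * (p - 1) * f a ^ (p - 2) * deriv f a ^ 2 + p * f a ^ (p - 1) * deriv (deriv f) a := by
  have hev : deriv (fun t => f t ^ p) =ᶠ[𝓝 a] fun t => deriv f t * p * f t ^ (p - 1) := by
    filter_upwards [hf.eventually (by simp), hf.continuousAt.eventually (lt_mem_nhds ha)]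
      with t hft hpos
    exact deriv_rpow_const (hft.differentiableAt (by simp)) (Or.inl hpos.ne')
  have hf' : DifferentiableAt ℝ (deriv f) a :=
    (hf.derivWithin (m := 1) (by norm_num)).differentiableAt (by simp)
  have hfp : DifferentiableAt ℝ (fun t => f t ^ (p - 1)) a :=
    (hf.differentiableAt (by simp)).rpow_const (Or.inl ha.ne')
  rw [hev.deriv_eq, deriv_fun_mul (hf'.mul_const p) hfp, deriv_mul_const hf',
    deriv_rpow_const (hf.differentiableAt (by simp)) (Or.inl ha.ne'), sub_sub,
    one_add_one_eq_two]
  ring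

theorem deriv_deriv_mul {f g : ℝ → ℝ} {a : ℝ} (hf : ContDiffAt ℝ 2 f a)
    (hg : ContDiffAt ℝ 2 g a) :
    deriv (deriv fun t => f t * g t) a =
      deriv (deriv f) a * g a + 2 * deriv f a * deriv g a + f a * deriv (deriv g) a := by
  have hev : deriv (fun t => f t * g t) =ᶠ[𝓝 a] fun t => deriv f t * g t + f t * deriv g t := by
    filter_upwards [hf.eventually (by simp), hg.eventually (by simp)] with t hft hgt
    exact deriv_fun_mul (hft.differentiableAt (by simp)) (hgt.differentiableAt (by simp))
  have hf' : DifferentiableAt ℝ (deriv f) a :=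
    (hf.derivWithin (m := 1) (by norm_num)).differentiableAt (by simp)
  have hg' : DifferentiableAt ℝ (deriv g) a :=
    (hg.derivWithin (m := 1) (by norm_num)).differentiableAt (by simp)
  have hfd := hf.differentiableAt (by simp)
  have hgd := hg.differentiableAt (by simp)
  rw [hev.deriv_eq, deriv_fun_add (f := fun t => deriv f t * g t) (g := fun t => f t * deriv g t)
    (hf'.mul hgd) (hfd.mul hg'), deriv_fun_mul hf' hgd, deriv_fun_mul hfd hg']
  ring

theorem deriv_quadratic (s a : ℝ) :
    deriv (fun t : ℝ => s + 2 * a * t + t ^ 2) = fun t => 2 * a + 2 * t := by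
  ext t
  rw [deriv_fun_add (by fun_prop) (by fun_prop)]
  simp

theorem deriv_deriv_quadratic (s a t : ℝ) :
    deriv (deriv fun t : ℝ => s + 2 * a * t + t ^ 2) t = 2 := by
  rw [deriv_quadratic, deriv_const_add, deriv_const_mul_field, deriv_id'', mul_one]

theorem deriv_const_add_mul_rpow {β q : ℝ} (c X : ℝ) (hX : 0 < X) :
    deriv (fun t : ℝ => c + β * (X + t) ^ q) 0 = β * (q * X ^ (q - 1)) := by
  rw [deriv_const_add, deriv_const_mul_field, deriv_rpow_const (by fun_prop) (by simp [hX.ne'])]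
  simp

theorem deriv_deriv_const_add_mul_rpow {β q : ℝ} (c X : ℝ) (hX : 0 < X) :
    deriv (deriv fun t : ℝ => c + β * (X + t) ^ q) 0 = β * (q * (q - 1) * X ^ (q - 2)) := by
  rw [deriv_const_add', deriv_const_mul_field', deriv_const_mul_field,
    deriv_deriv_rpow_const _ (by fun_prop) (by simpa)]
  simp

theorem ContDiffAt.comp_add_smul {E : Type*} [NormedAddCommGroup E] [NormedSpace ℝ E]
    {n : WithTop ℕ∞} {u : E → ℝ} {x : E} (hu : ContDiffAt ℝ n u x) (v : E) :
    ContDiffAt ℝ n (fun t : ℝ => u (x + t • v)) 0 := by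
  refine ContDiffAt.comp (g := u) 0 ?_ (by fun_prop)
  simpa using hu

section Directional

variable {m : ℕ}

theorem pderiv2_eq_deriv_deriv (u : EuclideanSpace ℝ (Fin m) × ℝ → ℝ)
    (v x : EuclideanSpace ℝ (Fin m) × ℝ) :
    pderiv2 u v v x = deriv (deriv fun t : ℝ => u (x + t • v)) 0 := by
  have h : (fun t : ℝ => pderiv1 u v (x + t • v)) = deriv fun t => u (x + t • v) := by
    funext t
    simp only [pderiv1, add_assoc, ← add_smul]
    simpa using deriv_comp_const_add (f := fun s => u (x + s • v)) (a := t) (x := 0)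
  rw [pderiv2, pderiv1, h]

theorem pderiv2_rpow_const {u : EuclideanSpace ℝ (Fin m) × ℝ → ℝ}
    {x : EuclideanSpace ℝ (Fin m) × ℝ} (hu : ContDiffAt ℝ 2 u x) (hux : 0 < u x)
    (v : EuclideanSpace ℝ (Fin m) × ℝ) (p : ℝ) :
    pderiv2 (fun y => u y ^ p) v v x =
      p * (p - 1) * u x ^ (p - 2) * pderiv1 u v x ^ 2 + p * u x ^ (p - 1) * pderiv2 u v v x := by
  rw [pderiv2_eq_deriv_deriv, pderiv2_eq_deriv_deriv, pderiv1]
  simpa using deriv_deriv_rpow_const p (hu.comp_add_smul v) (by simpa using hux)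

end Directional

/-- The difference of the two sides is `2γ (2γ - βq) PQ + β² γq (γq - 2) Q²`. -/
theorem sq_add_le_of_gradient_constants {P Q β γ q : ℝ} (hP : 0 ≤ P) (hQ : 0 ≤ Q)
    (hγ : 0 ≤ γ) (hβq : β * q ≤ 2 * γ) (hγq : 2 ≤ γ * q) :
    (P + β * Q) ^ 2 ≤ 4 * γ ^ 2 * Q * P + (P + β * Q - γ * β * q * Q) ^ 2 := by
  nlinarith [mul_nonneg (mul_nonneg hγ (sub_nonneg.2 hβq)) (mul_nonneg hP hQ),
    mul_nonneg (mul_nonneg (sq_nonneg β) (mul_nonneg (by linarith : 0 ≤ γ * q)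
      (sub_nonneg.2 hγq))) (sq_nonneg Q)]

namespace BaouendiGrushin

variable {m : ℕ} (β γ q : ℝ)

noncomputable def gauge (y : EuclideanSpace ℝ (Fin m) × ℝ) : ℝ := ‖y.1‖ ^ 2 + β * y.2 ^ q

noncomputable def W (y : EuclideanSpace ℝ (Fin m) × ℝ) : ℝ := y.2 * gauge β q y ^ (-γ)

variable {β γ q}

theorem gauge_pos (hβ : 0 < β) {x : EuclideanSpace ℝ (Fin m) × ℝ} (hx : 0 < x.2) :
    0 < gauge β q x := by
  unfold gauge; positivity

theorem contDiffAt_W (γ : ℝ) (n : WithTop ℕ∞) (hβ : 0 < β) {x : EuclideanSpace ℝ (Fin m) × ℝ}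
    (hx : 0 < x.2) : ContDiffAt ℝ n (W β γ q) x := by
  have hx2 : ContDiffAt ℝ n (fun y : EuclideanSpace ℝ (Fin m) × ℝ => y.2 ^ q) x :=
    contDiffAt_snd.rpow_const_of_ne hx.ne'
  have hs : ContDiffAt ℝ n (gauge β q) x :=
    ((contDiff_norm_sq ℝ).contDiffAt.comp x contDiffAt_fst).add (hx2.const_smul β)
  exact contDiffAt_snd.mul (hs.rpow_const_of_ne (gauge_pos hβ hx).ne')

theorem W_pos (hβ : 0 < β) {x : EuclideanSpace ℝ (Fin m) × ℝ} (hx : 0 < x.2) :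
    0 < W β γ q x := by
  have := gauge_pos (q := q) hβ hx
  unfold W; positivity

theorem gauge_add_smul_bvec (x : EuclideanSpace ℝ (Fin m) × ℝ) (i : Fin m) (t : ℝ) :
    gauge β q (x + t • bvec m i) = gauge β q x + 2 * x.1 i * t + t ^ 2 := by
  simp only [gauge, bvec, Prod.fst_add, Prod.snd_add, Prod.smul_mk, smul_zero, add_zero]
  rw [norm_add_sq_real, real_inner_smul_right, EuclideanSpace.inner_single_right, norm_smul]
  simp only [Real.ringHom_apply, one_mul, Real.norm_eq_abs, PiLp.norm_single, norm_one, mul_one,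
    sq_abs]
  ring

theorem add_smul_nvec (x : EuclideanSpace ℝ (Fin m) × ℝ) (t : ℝ) :
    x + t • nvec m = (x.1, x.2 + t) := by
  simp [nvec, Prod.ext_iff]

theorem W_add_smul_bvec (x : EuclideanSpace ℝ (Fin m) × ℝ) (i : Fin m) (t : ℝ) :
    W β γ q (x + t • bvec m i) = x.2 * (gauge β q x + 2 * x.1 i * t + t ^ 2) ^ (-γ) := by
  rw [W, gauge_add_smul_bvec]
  simp [bvec]

theorem W_add_smul_nvec (x : EuclideanSpace ℝ (Fin m) × ℝ) (t : ℝ) :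
    W β γ q (x + t • nvec m) = (x.2 + t) * (‖x.1‖ ^ 2 + β * (x.2 + t) ^ q) ^ (-γ) := by
  rw [W, gauge, add_smul_nvec]

theorem pderiv1_W_bvec {x : EuclideanSpace ℝ (Fin m) × ℝ} (hs : 0 < gauge β q x) (i : Fin m) :
    pderiv1 (W β γ q) (bvec m i) x = x.2 * (-γ * gauge β q x ^ (-γ - 1) * (2 * x.1 i)) := by
  simp only [pderiv1, W_add_smul_bvec, deriv_const_mul_field']
  rw [deriv_rpow_const (by fun_prop) (Or.inl (by simpa using hs.ne')), deriv_quadratic]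
  simp only [mul_zero, add_zero, ne_eq, OfNat.ofNat_ne_zero, not_false_eq_true, zero_pow]
  ring

theorem pderiv2_W_bvec {x : EuclideanSpace ℝ (Fin m) × ℝ} (hs : 0 < gauge β q x) (i : Fin m) :
    pderiv2 (W β γ q) (bvec m i) (bvec m i) x =
      x.2 * (-γ * (-γ - 1) * gauge β q x ^ (-γ - 2) * (2 * x.1 i) ^ 2
        + -γ * gauge β q x ^ (-γ - 1) * 2) := by
  simp only [pderiv2_eq_deriv_deriv, W_add_smul_bvec, deriv_const_mul_field']
  rw [deriv_deriv_rpow_const _ (by fun_prop) (by simpa), deriv_deriv_quadratic, deriv_quadratic]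
  simp only [mul_zero, add_zero, ne_eq, OfNat.ofNat_ne_zero, not_false_eq_true, zero_pow]

theorem pderiv1_W_nvec {x : EuclideanSpace ℝ (Fin m) × ℝ} (hx : 0 < x.2) (hs : 0 < gauge β q x) :
    pderiv1 (W β γ q) (nvec m) x =
      gauge β q x ^ (-γ) + x.2 * (-γ * gauge β q x ^ (-γ - 1) * (β * (q * x.2 ^ (q - 1)))) := by
  have hσ : ContDiffAt ℝ 2 (fun t : ℝ => ‖x.1‖ ^ 2 + β * (x.2 + t) ^ q) 0 := by
    fun_prop (disch := simp [hx.ne'])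
  have hσ0 : ‖x.1‖ ^ 2 + β * (x.2 + 0) ^ q ≠ 0 := by simpa [gauge] using hs.ne'
  simp only [pderiv1, W_add_smul_nvec]
  rw [deriv_fun_mul (by fun_prop) ((hσ.differentiableAt (by simp)).rpow_const (Or.inl hσ0)),
    deriv_rpow_const (hσ.differentiableAt (by simp)) (Or.inl hσ0),
    deriv_const_add_mul_rpow _ _ hx]
  simp only [deriv_const_add_id', add_zero, one_mul, gauge]
  ring

theorem pderiv2_W_nvec {x : EuclideanSpace ℝ (Fin m) × ℝ} (hx : 0 < x.2) (hs : 0 < gauge β q x) :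
    pderiv2 (W β γ q) (nvec m) (nvec m) x =
      2 * (-γ * gauge β q x ^ (-γ - 1) * (β * (q * x.2 ^ (q - 1))))
        + x.2 * (-γ * (-γ - 1) * gauge β q x ^ (-γ - 2) * (β * (q * x.2 ^ (q - 1))) ^ 2
          + -γ * gauge β q x ^ (-γ - 1) * (β * (q * (q - 1) * x.2 ^ (q - 2)))) := by
  have hσ : ContDiffAt ℝ 2 (fun t : ℝ => ‖x.1‖ ^ 2 + β * (x.2 + t) ^ q) 0 := by
    fun_prop (disch := simp [hx.ne'])
  have hσ0 : ‖x.1‖ ^ 2 + β * (x.2 + 0) ^ q ≠ 0 := by simpa [gauge] using hs.ne'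
  simp only [pderiv2_eq_deriv_deriv, W_add_smul_nvec]
  rw [deriv_deriv_mul (by fun_prop) (hσ.rpow_const_of_ne hσ0),
    deriv_deriv_rpow_const _ hσ (by simpa [gauge] using hs),
    deriv_rpow_const (hσ.differentiableAt (by simp)) (Or.inl hσ0),
    deriv_const_add_mul_rpow _ _ hx, deriv_deriv_const_add_mul_rpow _ _ hx]
  simp only [deriv_const_add_id', deriv_const', add_zero, zero_mul, zero_add, gauge]
  ring

theorem sum_pderiv2_W_bvec {x : EuclideanSpace ℝ (Fin m) × ℝ} (hs : 0 < gauge β q x) :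
    ∑ i, pderiv2 (W β γ q) (bvec m i) (bvec m i) x =
      x.2 * (4 * γ * (γ + 1) * gauge β q x ^ (-γ - 2) * ‖x.1‖ ^ 2
        - 2 * m * γ * gauge β q x ^ (-γ - 1)) := by
  have h : ∀ i, pderiv2 (W β γ q) (bvec m i) (bvec m i) x =
      x.2 * (4 * γ * (γ + 1) * gauge β q x ^ (-γ - 2)) * x.1 i ^ 2
        - x.2 * (2 * γ * gauge β q x ^ (-γ - 1)) := by
    intro i
    rw [pderiv2_W_bvec hs]
    ring
  rw [Finset.sum_congr rfl fun i _ => h i, Finset.sum_sub_distrib, ← Finset.mul_sum,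
    ← EuclideanSpace.real_norm_sq_eq, Finset.sum_const, Finset.card_univ, Fintype.card_fin,
    nsmul_eq_mul]
  ring

theorem sum_pderiv1_W_bvec_sq {x : EuclideanSpace ℝ (Fin m) × ℝ} (hs : 0 < gauge β q x) :
    ∑ i, pderiv1 (W β γ q) (bvec m i) x ^ 2 =
      4 * γ ^ 2 * x.2 ^ 2 * (gauge β q x ^ (-γ - 1)) ^ 2 * ‖x.1‖ ^ 2 := by
  simp only [pderiv1_W_bvec hs, EuclideanSpace.real_norm_sq_eq, Finset.mul_sum]
  congr 1 with i
  ring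

theorem gauge_two_add_two_mul {α : ℝ} {x : EuclideanSpace ℝ (Fin m) × ℝ} (hx : 0 < x.2) :
    gauge β (2 + 2 * α) x = ‖x.1‖ ^ 2 + β * (x.2 ^ (2 * α) * x.2 ^ 2) := by
  rw [gauge, add_comm 2, Real.rpow_add hx, Real.rpow_two]

theorem rpow_two_add_two_mul_sub_one {α X : ℝ} (hX : 0 < X) :
    X ^ (2 + 2 * α - 1) = X ^ (2 * α) * X := by
  rw [← Real.rpow_add_one hX.ne']
  ring_nf

/-- The choice of `β` and `γ` enters through `β (2 + 2α)² = 4` and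
`4 (γ + 1) = 2m + β (2 + 2α) (3 + 2α)`. -/
theorem grushin_W_eq_zero {α : ℝ} (hα : 1 + α ≠ 0) (hβ : β = ((1 + α) ^ 2)⁻¹)
    (hγ : γ = (m : ℝ) / 2 + 1 / (2 * (1 + α))) {x : EuclideanSpace ℝ (Fin m) × ℝ}
    (hx : 0 < x.2) :
    x.2 ^ (2 * α) * ∑ i, pderiv2 (W β γ (2 + 2 * α)) (bvec m i) (bvec m i) x
      + pderiv2 (W β γ (2 + 2 * α)) (nvec m) (nvec m) x = 0 := by
  have hs : 0 < gauge β (2 + 2 * α) x := gauge_pos (by rw [hβ]; positivity) hx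
  have hP : ‖x.1‖ ^ 2 = gauge β (2 + 2 * α) x - β * (x.2 ^ (2 * α) * x.2 ^ 2) := by
    rw [gauge_two_add_two_mul hx]
    ring
  rw [sum_pderiv2_W_bvec hs, pderiv2_W_nvec hx hs, rpow_two_add_two_mul_sub_one hx, hP,
    show 2 + 2 * α - 2 = 2 * α by ring]
  set s := gauge β (2 + 2 * α) x
  have hs2 : s ^ (-γ - 2) = s ^ (-γ - 1) / s := by
    rw [← Real.rpow_sub_one hs.ne']
    ring_nf
  rw [hs2]
  generalize s ^ (-γ - 1) = K
  clear_value s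
  subst hβ hγ
  field_simp
  ring

theorem gauge_rpow_le_grushin_grad_sq {α : ℝ} (hα : 0 ≤ α) (hm : 1 ≤ m)
    (hβ : β = ((1 + α) ^ 2)⁻¹) (hγ : γ = (m : ℝ) / 2 + 1 / (2 * (1 + α)))
    {x : EuclideanSpace ℝ (Fin m) × ℝ} (hx : 0 < x.2) :
    gauge β (2 + 2 * α) x ^ (-(2 * γ)) ≤
      x.2 ^ (2 * α) * ∑ i, pderiv1 (W β γ (2 + 2 * α)) (bvec m i) x ^ 2
        + pderiv1 (W β γ (2 + 2 * α)) (nvec m) x ^ 2 := by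
  have hs : 0 < gauge β (2 + 2 * α) x := gauge_pos (by rw [hβ]; positivity) hx
  have hm' : (1 : ℝ) ≤ m := by exact_mod_cast hm
  have hβq : β * (2 + 2 * α) ≤ 2 * γ := by
    rw [hβ, hγ]
    field_simp
    nlinarith
  have hγq : 2 ≤ γ * (2 + 2 * α) := by
    rw [hγ]
    field_simp
    nlinarith
  have key := sq_add_le_of_gradient_constants (sq_nonneg ‖x.1‖)
    (by positivity : 0 ≤ x.2 ^ (2 * α) * x.2 ^ 2) (by rw [hγ]; positivity) hβq hγq
  rw [← gauge_two_add_two_mul hx] at key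
  rw [sum_pderiv1_W_bvec_sq hs, pderiv1_W_nvec hx hs, rpow_two_add_two_mul_sub_one hx]
  set s := gauge β (2 + 2 * α) x
  have hsγ : s ^ (-γ) = s ^ (-γ - 1) * s := by
    rw [← Real.rpow_add_one hs.ne']
    ring_nf
  have hs2γ : s ^ (-(2 * γ)) = (s ^ (-γ - 1)) ^ 2 * s ^ 2 := by
    rw [← mul_pow, ← hsγ, ← Real.rpow_mul_natCast hs.le]
    ring_nf
  rw [hs2γ, hsγ]
  calc (s ^ (-γ - 1)) ^ 2 * s ^ 2
      ≤ (s ^ (-γ - 1)) ^ 2 * (4 * γ ^ 2 * (x.2 ^ (2 * α) * x.2 ^ 2) * ‖x.1‖ ^ 2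
          + (s - γ * β * (2 + 2 * α) * (x.2 ^ (2 * α) * x.2 ^ 2)) ^ 2) := by gcongr
    _ = _ := by ring

end BaouendiGrushin

open BaouendiGrushin in
theorem stmt10_general (m : ℕ) (hm : 1 ≤ m) (α ρ : ℝ) (hα : 0 < α) (hρ0 : 0 < ρ)
    (β γ : ℝ) (hβ : β = ((1 + α) ^ 2)⁻¹) (hγ : γ = (m : ℝ) / 2 + 1 / (2 * (1 + α)))
    (w : EuclideanSpace ℝ (Fin m) × ℝ → ℝ)
    (hw : ∀ x : EuclideanSpace ℝ (Fin m) × ℝ,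
      w x = x.2 * (‖x.1‖ ^ 2 + β * x.2 ^ (2 + 2 * α)) ^ (-γ)) :
    ∀ x : EuclideanSpace ℝ (Fin m) × ℝ, 0 < x.2 →
      (x.2 ^ (2 * α) * ∑ i : Fin m,
            pderiv2 (fun y => w y ^ (1 + ρ)) (bvec m i) (bvec m i) x
          + pderiv2 (fun y => w y ^ (1 + ρ)) (nvec m) (nvec m) x
        = ρ * (1 + ρ) * w x ^ (ρ - 1) *
            (x.2 ^ (2 * α) * ∑ i : Fin m, pderiv1 w (bvec m i) x ^ 2
              + pderiv1 w (nvec m) x ^ 2)) ∧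
      ρ * (1 + ρ) * w x ^ (ρ - 1) * (‖x.1‖ ^ 2 + β * x.2 ^ (2 + 2 * α)) ^ (-(2 * γ))
        ≤ ρ * (1 + ρ) * w x ^ (ρ - 1) *
            (x.2 ^ (2 * α) * ∑ i : Fin m, pderiv1 w (bvec m i) x ^ 2
              + pderiv1 w (nvec m) x ^ 2) ∧
      0 < ρ * (1 + ρ) * w x ^ (ρ - 1) *
            (‖x.1‖ ^ 2 + β * x.2 ^ (2 + 2 * α)) ^ (-(2 * γ)) := by
  obtain rfl : w = W β γ (2 + 2 * α) := funext hw
  intro x hx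
  have hβpos : 0 < β := by rw [hβ]; positivity
  have hWpos : 0 < W β γ (2 + 2 * α) x := W_pos hβpos hx
  have hs : 0 < gauge β (2 + 2 * α) x := gauge_pos hβpos hx
  have hchain : ∀ v, pderiv2 (fun y => W β γ (2 + 2 * α) y ^ (1 + ρ)) v v x =
      ρ * (1 + ρ) * W β γ (2 + 2 * α) x ^ (ρ - 1) * pderiv1 (W β γ (2 + 2 * α)) v x ^ 2
        + (1 + ρ) * W β γ (2 + 2 * α) x ^ ρ * pderiv2 (W β γ (2 + 2 * α)) v v x := by
    intro v
    rw [pderiv2_rpow_const (contDiffAt_W γ 2 hβpos hx) hWpos, add_sub_cancel_left,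
      show 1 + ρ - 2 = ρ - 1 by ring]
    ring
  refine ⟨?_, ?_, ?_⟩
  · simp only [hchain, Finset.sum_add_distrib, ← Finset.mul_sum]
    linear_combination (1 + ρ) * W β γ (2 + 2 * α) x ^ ρ *
      grushin_W_eq_zero (by linarith) hβ hγ hx
  · exact mul_le_mul_of_nonneg_left (gauge_rpow_le_grushin_grad_sq hα.le hm hβ hγ hx)
      (by positivity)
  · exact mul_pos (by positivity) (Real.rpow_pos_of_pos hs _)

/-- For `w(x) = xₙ(|x'|² + βxₙ^{2+2α})^{-γ}` and `ρ ∈ (0,1)`, the function `w^{1+ρ}` is a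
strict subsolution of the Baouendi–Grushin operator in the upper half space:
`𝔏(w^{1+ρ}) = ρ(1+ρ)w^{ρ−1}[xₙ^{2α}Σ(Dᵢw)² + (Dₙw)²] ≥ ρ(1+ρ)w^{ρ−1}(|x'|²+βxₙ^{2+2α})^{-2γ} > 0`. -/
theorem stmt10 (m : ℕ) (hm : 1 ≤ m) (α ρ : ℝ) (hα : 0 < α) (hρ0 : 0 < ρ) (hρ1 : ρ < 1)
    (β γ : ℝ) (hβ : β = ((1 + α) ^ 2)⁻¹) (hγ : γ = (m : ℝ) / 2 + 1 / (2 * (1 + α)))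
    (w : EuclideanSpace ℝ (Fin m) × ℝ → ℝ)
    (hw : ∀ x : EuclideanSpace ℝ (Fin m) × ℝ,
      w x = x.2 * (‖x.1‖ ^ 2 + β * x.2 ^ (2 + 2 * α)) ^ (-γ)) :
    ∀ x : EuclideanSpace ℝ (Fin m) × ℝ, 0 < x.2 →
      (x.2 ^ (2 * α) * ∑ i : Fin m,
            pderiv2 (fun y => w y ^ (1 + ρ)) (bvec m i) (bvec m i) x
          + pderiv2 (fun y => w y ^ (1 + ρ)) (nvec m) (nvec m) x
        = ρ * (1 + ρ) * w x ^ (ρ - 1) *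
            (x.2 ^ (2 * α) * ∑ i : Fin m, pderiv1 w (bvec m i) x ^ 2
              + pderiv1 w (nvec m) x ^ 2)) ∧
      ρ * (1 + ρ) * w x ^ (ρ - 1) * (‖x.1‖ ^ 2 + β * x.2 ^ (2 + 2 * α)) ^ (-(2 * γ))
        ≤ ρ * (1 + ρ) * w x ^ (ρ - 1) *
            (x.2 ^ (2 * α) * ∑ i : Fin m, pderiv1 w (bvec m i) x ^ 2
              + pderiv1 w (nvec m) x ^ 2) ∧
      0 < ρ * (1 + ρ) * w x ^ (ρ - 1) *
            (‖x.1‖ ^ 2 + β * x.2 ^ (2 + 2 * α)) ^ (-(2 * γ)) :=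
  stmt10_general m hm α ρ hα hρ0 β γ hβ hγ w hw
end

section
/- For i, j < n and w as above, the second derivative satisfies the pointwise bound |D_{ij}(w^{1+ρ})| ≤ C(ρ,α,n) w^{ρ−1} x_n² (|x'|² + β x_n^{2+2α})^{-(2γ+1)} in {x_n > 0}. -/
open scoped BigOperators

private lemma quad_hasDerivAt (A B : ℝ) :
    HasDerivAt (fun s : ℝ => A + B * s + s ^ 2) B 0 := by
  have h : HasDerivAt (fun s : ℝ => A + B * s + s ^ 2) (0 + B * 1 + 2 * 0 ^ 1) 0 :=
    ((hasDerivAt_const 0 A).add ((hasDerivAt_id 0).const_mul B)).add (hasDerivAt_pow 2 0)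
  simpa using h

private lemma quad_rpow_hasDerivAt (A B τ : ℝ) (hA : 0 < A) :
    HasDerivAt (fun s : ℝ => (A + B * s + s ^ 2) ^ τ) (τ * A ^ (τ - 1) * B) 0 := by
  have h := (quad_hasDerivAt A B).rpow_const (p := τ) (Or.inl (by simpa using hA.ne'))
  convert h using 1
  norm_num
  ring

private lemma lin_hasDerivAt (A B : ℝ) :
    HasDerivAt (fun s : ℝ => A + B * s) B 0 := by
  have h : HasDerivAt (fun s : ℝ => A + B * s) (0 + B * 1) 0 :=
    (hasDerivAt_const 0 A).add ((hasDerivAt_id 0).const_mul B)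
  simpa using h

/-- For `i, j < n` and `w(x) = xₙ(|x'|² + βxₙ^{2+2α})^{-γ}`, the second derivatives of
`w^{1+ρ}` satisfy `|D_{ij}(w^{1+ρ})| ≤ C(ρ,α,n) w^{ρ−1} xₙ² (|x'|²+βxₙ^{2+2α})^{-(2γ+1)}`
in the upper half space. -/
theorem stmt11 (m : ℕ) (hm : 1 ≤ m) (α ρ : ℝ) (hα : 0 < α) (hρ0 : 0 < ρ) (hρ1 : ρ < 1)
    (β γ : ℝ) (hβ : β = ((1 + α) ^ 2)⁻¹) (hγ : γ = (m : ℝ) / 2 + 1 / (2 * (1 + α)))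
    (w : EuclideanSpace ℝ (Fin m) × ℝ → ℝ)
    (hw : ∀ x : EuclideanSpace ℝ (Fin m) × ℝ,
      w x = x.2 * (‖x.1‖ ^ 2 + β * x.2 ^ (2 + 2 * α)) ^ (-γ)) :
    ∃ C > (0 : ℝ), ∀ x : EuclideanSpace ℝ (Fin m) × ℝ, 0 < x.2 → ∀ i j : Fin m,
      |pderiv2 (fun y => w y ^ (1 + ρ)) (bvec m i) (bvec m j) x|
        ≤ C * w x ^ (ρ - 1) * x.2 ^ 2 *
            (‖x.1‖ ^ 2 + β * x.2 ^ (2 + 2 * α)) ^ (-(2 * γ + 1)) := by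
  have hβ0 : 0 < β := by rw [hβ]; positivity
  set σ : ℝ := -γ * (1 + ρ) with hσ
  refine ⟨|σ| * (4 * |σ - 1| + 2) + 1, by positivity, ?_⟩
  intro x hx i j
  set c : ℝ := ‖x.1‖ ^ 2 + β * x.2 ^ (2 + 2 * α) with hc
  have hr : 0 < x.2 ^ (2 + 2 * α) := Real.rpow_pos_of_pos hx _
  have hc0 : 0 < c := by
    rw [hc]; exact add_pos_of_nonneg_of_pos (sq_nonneg _) (mul_pos hβ0 hr)
  have hK : 0 < x.2 ^ (1 + ρ) := Real.rpow_pos_of_pos hx _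
  have hvec : ∀ s t : ℝ, x + s • bvec m j + t • bvec m i =
      ((x.1 + s • EuclideanSpace.single j (1:ℝ) + t • EuclideanSpace.single i (1:ℝ), x.2)
        : EuclideanSpace ℝ (Fin m) × ℝ) := by
    intro s t; refine Prod.ext ?_ ?_ <;> simp [bvec]
  have hQ : ∀ s t : ℝ,
      ‖x.1 + s • EuclideanSpace.single j (1:ℝ) + t • EuclideanSpace.single i (1:ℝ)‖ ^ 2
          + β * x.2 ^ (2 + 2 * α)
        = (c + 2 * x.1 j * s + s ^ 2)
            + (2 * x.1 i + 2 * (if i = j then (1:ℝ) else 0) * s) * t + t ^ 2 := by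
    intro s t
    rcases eq_or_ne i j with rfl | hij
    · rw [norm_add_sq_real, norm_add_sq_real]
      simp [hc, real_inner_smul_right, inner_add_left, real_inner_smul_left,
        EuclideanSpace.inner_single_right, EuclideanSpace.inner_single_left,
        EuclideanSpace.single_apply, norm_smul]
      ring
    · rw [norm_add_sq_real, norm_add_sq_real]
      simp [hc, real_inner_smul_right, inner_add_left, real_inner_smul_left,
        EuclideanSpace.inner_single_right, EuclideanSpace.inner_single_left,
        EuclideanSpace.single_apply, norm_smul, hij, Ne.symm hij]
      ring
  have hPpos : ∀ s t : ℝ, 0 < (c + 2 * x.1 j * s + s ^ 2)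
      + (2 * x.1 i + 2 * (if i = j then (1:ℝ) else 0) * s) * t + t ^ 2 := by
    intro s t
    rw [← hQ s t]
    exact add_pos_of_nonneg_of_pos (sq_nonneg _) (mul_pos hβ0 hr)
  have hu : ∀ s t : ℝ,
      w (x + s • bvec m j + t • bvec m i) ^ (1 + ρ)
        = x.2 ^ (1 + ρ) * (((c + 2 * x.1 j * s + s ^ 2)
            + (2 * x.1 i + 2 * (if i = j then (1:ℝ) else 0) * s) * t + t ^ 2) ^ σ) := by
    intro s t
    rw [hvec s t, hw]
    simp only
    rw [hQ s t, Real.mul_rpow hx.le (Real.rpow_nonneg (hPpos s t).le _),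
      ← Real.rpow_mul (hPpos s t).le, ← hσ]
  have hinner : ∀ s : ℝ,
      pderiv1 (fun y => w y ^ (1 + ρ)) (bvec m i) (x + s • bvec m j)
        = x.2 ^ (1 + ρ) * σ * (((c + 2 * x.1 j * s + s ^ 2) ^ (σ - 1))
            * (2 * x.1 i + 2 * (if i = j then (1:ℝ) else 0) * s)) := by
    intro s
    have hA : 0 < c + 2 * x.1 j * s + s ^ 2 := by nlinarith [hPpos s 0]
    have hfun : (fun t : ℝ => (fun y => w y ^ (1 + ρ)) (x + s • bvec m j + t • bvec m i))
        = fun t : ℝ => x.2 ^ (1 + ρ) * (((c + 2 * x.1 j * s + s ^ 2)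
            + (2 * x.1 i + 2 * (if i = j then (1:ℝ) else 0) * s) * t + t ^ 2) ^ σ) :=
      funext fun t => hu s t
    show deriv (fun t : ℝ => (fun y => w y ^ (1 + ρ)) (x + s • bvec m j + t • bvec m i)) 0 = _
    rw [hfun]
    rw [((quad_rpow_hasDerivAt (c + 2 * x.1 j * s + s ^ 2)
      (2 * x.1 i + 2 * (if i = j then (1:ℝ) else 0) * s) σ hA).const_mul
        (x.2 ^ (1 + ρ))).deriv]
    ring
  have houter : pderiv2 (fun y => w y ^ (1 + ρ)) (bvec m i) (bvec m j) x
      = x.2 ^ (1 + ρ) * σ * ((σ - 1) * c ^ (σ - 2) * (2 * x.1 j) * (2 * x.1 i)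
          + c ^ (σ - 1) * (2 * (if i = j then (1:ℝ) else 0))) := by
    have hfun : (fun s : ℝ => pderiv1 (fun y => w y ^ (1 + ρ)) (bvec m i) (x + s • bvec m j))
        = fun s : ℝ => x.2 ^ (1 + ρ) * σ * (((c + 2 * x.1 j * s + s ^ 2) ^ (σ - 1))
            * (2 * x.1 i + 2 * (if i = j then (1:ℝ) else 0) * s)) := funext hinner
    show deriv (fun s : ℝ => pderiv1 (fun y => w y ^ (1 + ρ)) (bvec m i) (x + s • bvec m j)) 0 = _
    rw [hfun]
    have h4 : HasDerivAt (fun s : ℝ => x.2 ^ (1 + ρ) * σ *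
          (((c + 2 * x.1 j * s + s ^ 2) ^ (σ - 1))
            * (2 * x.1 i + 2 * (if i = j then (1:ℝ) else 0) * s)))
        ((x.2 ^ (1 + ρ) * σ) * (((σ - 1) * c ^ (σ - 1 - 1) * (2 * x.1 j))
            * (2 * x.1 i + 2 * (if i = j then (1:ℝ) else 0) * 0)
          + ((c + 2 * x.1 j * 0 + 0 ^ 2) ^ (σ - 1))
            * (2 * (if i = j then (1:ℝ) else 0)))) 0 :=
      ((quad_rpow_hasDerivAt c (2 * x.1 j) (σ - 1) hc0).mul
        (lin_hasDerivAt (2 * x.1 i) (2 * (if i = j then (1:ℝ) else 0)))).const_mul _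
    rw [h4.deriv, show σ - 1 - 1 = σ - 2 from by ring]
    norm_num
  have hwx : w x = x.2 * c ^ (-γ) := by rw [hw, ← hc]
  have e1 : (x.2 * c ^ (-γ)) ^ (ρ - 1) = x.2 ^ (ρ - 1) * c ^ (-γ * (ρ - 1)) := by
    rw [Real.mul_rpow hx.le (Real.rpow_nonneg hc0.le _), ← Real.rpow_mul hc0.le]
  have e2 : x.2 ^ (ρ - 1) * x.2 ^ (2 : ℕ) = x.2 ^ (1 + ρ) := by
    rw [← Real.rpow_natCast x.2 2, ← Real.rpow_add hx]
    congr 1; push_cast; ring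
  have e3 : c ^ (-γ * (ρ - 1)) * c ^ (-(2 * γ + 1)) = c ^ (σ - 1) := by
    rw [← Real.rpow_add hc0]; congr 1; rw [hσ]; ring
  have hRHS : (|σ| * (4 * |σ - 1| + 2) + 1) * (x.2 * c ^ (-γ)) ^ (ρ - 1) * x.2 ^ 2
        * c ^ (-(2 * γ + 1))
      = (|σ| * (4 * |σ - 1| + 2) + 1) * (x.2 ^ (1 + ρ) * c ^ (σ - 1)) := by
    rw [e1, ← e2, ← e3]; ring
  rw [houter, hwx, hRHS]
  -- final estimate
  have hc1 : 0 < c ^ (σ - 1) := Real.rpow_pos_of_pos hc0 _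
  have hc2 : 0 < c ^ (σ - 2) := Real.rpow_pos_of_pos hc0 _
  have hcc : c ^ (σ - 2) * c = c ^ (σ - 1) := by
    rw [← Real.rpow_add_one hc0.ne' (σ - 2)]; congr 1; ring
  have hsq : ∀ k : Fin m, (x.1 k) ^ 2 ≤ ‖x.1‖ ^ 2 := by
    intro k
    have h : ‖x.1‖ ^ 2 = ∑ l, (x.1 l) ^ 2 := by
      rw [EuclideanSpace.norm_eq, Real.sq_sqrt (by positivity)]
      simp [Real.norm_eq_abs, sq_abs]
    rw [h]
    exact Finset.single_le_sum (fun l _ => sq_nonneg (x.1 l)) (Finset.mem_univ k)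
  have hab : |x.1 i| * |x.1 j| ≤ c := by
    have h1 := hsq i; have h2 := hsq j
    have hS : ‖x.1‖ ^ 2 ≤ c := by
      have hpos := mul_pos hβ0 hr
      rw [hc]; linarith
    have key : 2 * |x.1 i| * |x.1 j| ≤ (x.1 i) ^ 2 + (x.1 j) ^ 2 := by
      have h := two_mul_le_add_sq |x.1 i| |x.1 j|
      simpa [sq_abs] using h
    linarith
  have hd : |if i = j then (1:ℝ) else 0| ≤ 1 := by split_ifs <;> norm_num
  have habs2 : |(2:ℝ)| = 2 := by norm_num
  have hT1 : |(σ - 1) * c ^ (σ - 2) * (2 * x.1 j) * (2 * x.1 i)|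
      ≤ 4 * |σ - 1| * c ^ (σ - 1) := by
    simp only [abs_mul, abs_of_pos hc2, abs_two]
    calc |σ - 1| * c ^ (σ - 2) * (2 * |x.1 j|) * (2 * |x.1 i|)
        = 4 * |σ - 1| * (c ^ (σ - 2) * (|x.1 i| * |x.1 j|)) := by ring
      _ ≤ 4 * |σ - 1| * c ^ (σ - 1) := by
          have h4 : c ^ (σ - 2) * (|x.1 i| * |x.1 j|) ≤ c ^ (σ - 2) * c :=
            mul_le_mul_of_nonneg_left hab hc2.le
          rw [hcc] at h4
          exact mul_le_mul_of_nonneg_left h4 (by positivity)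
  have hT2 : |c ^ (σ - 1) * (2 * (if i = j then (1:ℝ) else 0))| ≤ 2 * c ^ (σ - 1) := by
    simp only [abs_mul, abs_of_pos hc1, abs_two]
    calc c ^ (σ - 1) * (2 * |if i = j then (1:ℝ) else 0|)
        = 2 * (c ^ (σ - 1) * |if i = j then (1:ℝ) else 0|) := by ring
      _ ≤ 2 * (c ^ (σ - 1) * 1) :=
          mul_le_mul_of_nonneg_left (mul_le_mul_of_nonneg_left hd hc1.le) (by norm_num)
      _ = 2 * c ^ (σ - 1) := by ring
  have hsum : |(σ - 1) * c ^ (σ - 2) * (2 * x.1 j) * (2 * x.1 i)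
        + c ^ (σ - 1) * (2 * (if i = j then (1:ℝ) else 0))|
      ≤ 4 * |σ - 1| * c ^ (σ - 1) + 2 * c ^ (σ - 1) :=
    (abs_add_le _ _).trans (add_le_add hT1 hT2)
  have habsL : |x.2 ^ (1 + ρ) * σ * ((σ - 1) * c ^ (σ - 2) * (2 * x.1 j) * (2 * x.1 i)
        + c ^ (σ - 1) * (2 * (if i = j then (1:ℝ) else 0)))|
      = x.2 ^ (1 + ρ) * |σ| * |(σ - 1) * c ^ (σ - 2) * (2 * x.1 j) * (2 * x.1 i)
        + c ^ (σ - 1) * (2 * (if i = j then (1:ℝ) else 0))| := by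
    rw [abs_mul, abs_mul, abs_of_pos hK]
  rw [habsL]
  have hstep : x.2 ^ (1 + ρ) * |σ| * |(σ - 1) * c ^ (σ - 2) * (2 * x.1 j) * (2 * x.1 i)
        + c ^ (σ - 1) * (2 * (if i = j then (1:ℝ) else 0))|
      ≤ x.2 ^ (1 + ρ) * |σ| * (4 * |σ - 1| * c ^ (σ - 1) + 2 * c ^ (σ - 1)) :=
    mul_le_mul_of_nonneg_left hsum (mul_nonneg hK.le (abs_nonneg σ))
  refine hstep.trans ?_
  have hEq : x.2 ^ (1 + ρ) * |σ| * (4 * |σ - 1| * c ^ (σ - 1) + 2 * c ^ (σ - 1))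
      = (|σ| * (4 * |σ - 1| + 2)) * (x.2 ^ (1 + ρ) * c ^ (σ - 1)) := by ring
  rw [hEq]
  exact mul_le_mul_of_nonneg_right (by linarith) (mul_pos hK hc1).le
end
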